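/- Let S be a 3-valued structure with nodes u1,...,un, and suppose the formulas node^S_{u_i}(w) used in γ̂(S) are arbitrary first-order formulas with free variable w satisfying the mutual-exclusivity property (for every 2-valued structure embedding into S, each node satisfies at most one node formula). Then every 2-valued structure S♮ with S♮ ⊨ γ̂(S) satisfies S♮ ∈ γ(S); that is, S♮ ⊨ F and there is a surjective embedding of S♮ into S. -/
import Mathlib


/-!
Common framework: 2-valued and 3-valued logical structures over a relational
vocabulary with a designated binary equality predicate, embedding, first-order
formulas with transitive closure and their Tarskian semantics, characteristic
formulas, canonical abstraction.
-/

namespace HeapAbs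

/-- The three truth values 0, 1/2, 1. -/
inductive TV : Type
  | zero
  | half
  | one
  deriving DecidableEq

/-- Information order on truth values: `l1 ⊑ l2` iff `l1 = l2` or `l2 = 1/2`. -/
def TV.le (a b : TV) : Prop := a = b ∨ b = TV.half

/-- `v` is the least upper bound (join) of the set `A` in the information order. -/
def TV.IsJoin (A : Set TV) (v : TV) : Prop :=
  (∀ a ∈ A, TV.le a v) ∧ ∀ w, (∀ a ∈ A, TV.le a w) → TV.le v w

/-- A (relational) vocabulary: a set of predicate symbols with arities and a
designated binary equality symbol. -/
structure Voc : Type 1 where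
  rel : Type
  ar : rel → ℕ
  eqr : rel
  eq_ar : ar eqr = 2

/-- The pair `(u, v)` as a tuple (used for binary predicates). -/
def pair {α : Type _} {n : ℕ} (u v : α) : Fin n → α :=
  fun i => if (i : ℕ) = 0 then u else v

/-- A 3-valued logical structure over the vocabulary `σ`. -/
structure Str3 (σ : Voc) : Type 1 where
  U : Type
  ι : (r : σ.rel) → (Fin (σ.ar r) → U) → TV
  eq_refl : ∀ u : U, ι σ.eqr (pair u u) ≠ TV.zero
  eq_ne : ∀ u v : U, u ≠ v → ι σ.eqr (pair u v) = TV.zero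

/-- A 2-valued logical structure over `σ`: all predicate values are definite and
the equality symbol is interpreted as true equality. -/
structure Str2 (σ : Voc) : Type 1 where
  U : Type
  ι : (r : σ.rel) → (Fin (σ.ar r) → U) → Bool
  eq_iff : ∀ u v : U, ι σ.eqr (pair u v) = true ↔ u = v

/-- The value of a predicate of a 2-valued structure, seen as a truth value. -/
def Str2.tv {σ : Voc} (C : Str2 σ) (r : σ.rel) (t : Fin (σ.ar r) → C.U) : TV :=
  if C.ι r t then TV.one else TV.zero

/-- `f` embeds the 2-valued structure `C` into the 3-valued structure `S`:
`f` is surjective and every predicate value of `C` is ⊑ the corresponding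
value of `S`. -/
def Embeds {σ : Voc} (C : Str2 σ) (S : Str3 σ) (f : C.U → S.U) : Prop :=
  Function.Surjective f ∧
    ∀ (r : σ.rel) (t : Fin (σ.ar r) → C.U), TV.le (C.tv r t) (S.ι r (f ∘ t))

/-- First-order formulas with transitive closure over vocabulary `σ`, with
free variables drawn from `V`. -/
inductive Fml (σ : Voc) : Type → Type 1 where
  | tru {V : Type} : Fml σ V
  | atom {V : Type} (r : σ.rel) (ts : Fin (σ.ar r) → V) : Fml σ V
  | not {V : Type} : Fml σ V → Fml σ V
  | or {V : Type} : Fml σ V → Fml σ V → Fml σ V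
  | ex {V : Type} : Fml σ (Option V) → Fml σ V
  | tc {V : Type} (φ : Fml σ (Option (Option V))) (a b : V) : Fml σ V

/-- Tarskian satisfaction of a formula in a 2-valued structure under an
assignment `ρ` of the free variables. -/
def Str2.Sat {σ : Voc} (C : Str2 σ) : {V : Type} → (V → C.U) → Fml σ V → Prop
  | _, _, .tru => True
  | _, ρ, .atom r ts => C.ι r (ρ ∘ ts) = true
  | _, ρ, .not φ => ¬ C.Sat ρ φ
  | _, ρ, .or φ ψ => C.Sat ρ φ ∨ C.Sat ρ ψ
  | _, ρ, .ex φ => ∃ m : C.U, C.Sat (fun v => Option.elim v m ρ) φ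
  | _, ρ, .tc φ a b =>
      Relation.TransGen
        (fun x y => C.Sat (fun v => Option.elim v y (fun v' => Option.elim v' x ρ)) φ)
        (ρ a) (ρ b)

/-- Satisfaction of a closed formula. -/
def SatC {σ : Voc} (C : Str2 σ) (φ : Fml σ Empty) : Prop :=
  C.Sat (fun x => x.elim) φ

namespace Fml

def fls {σ : Voc} {V : Type} : Fml σ V := .not .tru

def and {σ : Voc} {V : Type} (φ ψ : Fml σ V) : Fml σ V := .not (.or (.not φ) (.not ψ))

def imp {σ : Voc} {V : Type} (φ ψ : Fml σ V) : Fml σ V := .or (.not φ) ψ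

def all {σ : Voc} {V : Type} (φ : Fml σ (Option V)) : Fml σ V := .not (.ex (.not φ))

def conj {σ : Voc} {V : Type} (l : List (Fml σ V)) : Fml σ V := l.foldr .and .tru

def disj {σ : Voc} {V : Type} (l : List (Fml σ V)) : Fml σ V := l.foldr .or .fls

/-- Renaming of free variables. -/
def map {σ : Voc} : {V W : Type} → (V → W) → Fml σ V → Fml σ W
  | _, _, _, .tru => .tru
  | _, _, g, .atom r ts => .atom r (g ∘ ts)
  | _, _, g, .not φ => .not (φ.map g)
  | _, _, g, .or φ ψ => .or (φ.map g) (ψ.map g)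
  | _, _, g, .ex φ => .ex (φ.map (Option.map g))
  | _, _, g, .tc φ a b => .tc (φ.map (Option.map (Option.map g))) (g a) (g b)

end Fml

/-- The characteristic formula `p^B` of the truth value `B` for the predicate `p`:
`p^0 := ¬p`, `p^1 := p`, `p^{1/2} := true`. -/
def charFml {σ : Voc} {V : Type} (p : σ.rel) (ts : Fin (σ.ar p) → V) : TV → Fml σ V
  | TV.zero => .not (.atom p ts)
  | TV.one => .atom p ts
  | TV.half => .tru

/-- `node` is a family of node formulas (one per node of `S`, with a single free
variable `w`) witnessing that `S` is FO-identifiable: for every 2-valued `C`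
embedding into `S` via `f` and every concrete node `uh`, `f uh = u` iff `C`
satisfies `node u` under `[w ↦ uh]`. -/
def IsNodeFamily {σ : Voc} (S : Str3 σ) (node : S.U → Fml σ Unit) : Prop :=
  ∀ (C : Str2 σ) (f : C.U → S.U), Embeds C S f →
    ∀ (uh : C.U) (u : S.U), f uh = u ↔ C.Sat (fun _ => uh) (node u)

/-- `S` is FO-identifiable. -/
def FOIdentifiable {σ : Voc} (S : Str3 σ) : Prop :=
  ∃ node : S.U → Fml σ Unit, IsNodeFamily S node

/-- Mutual exclusivity of a family of node formulas: in every 2-valued structure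
that embeds into `S`, every concrete node satisfies at most one node formula. -/
def MutExcl {σ : Voc} (S : Str3 σ) (node : S.U → Fml σ Unit) : Prop :=
  ∀ C : Str2 σ, (∃ f : C.U → S.U, Embeds C S f) →
    ∀ (uh : C.U) (u1 u2 : S.U), u1 ≠ u2 →
      ¬ (C.Sat (fun _ => uh) (node u1) ∧ C.Sat (fun _ => uh) (node u2))

/-- `S` is a bounded structure: any two distinct nodes are distinguished by a
unary predicate having distinct definite values on them. -/
def Bounded {σ : Voc} (S : Str3 σ) : Prop :=
  ∀ u1 u2 : S.U, u1 ≠ u2 →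
    ∃ p : σ.rel, σ.ar p = 1 ∧
      S.ι p (fun _ => u1) ≠ S.ι p (fun _ => u2) ∧
      S.ι p (fun _ => u1) ≠ TV.half ∧ S.ι p (fun _ => u2) ≠ TV.half

/-- The node formula `node^S_u(w) := ⋀_{p unary} p^{ι^S(p)(u)}(w)`. -/
noncomputable def boundedNode {σ : Voc} [Fintype σ.rel] (S : Str3 σ) (u : S.U) : Fml σ Unit :=
  Fml.conj
    (((Finset.univ : Finset {p : σ.rel // σ.ar p = 1}).toList).map
      (fun p => charFml p.1 (fun _ => ()) (S.ι p.1 (fun _ => u))))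

/-- The conjunction `⋀_j node_{t j}(w_j)` over the components of a tuple of
abstract nodes, as a formula with free variables `w_1, …, w_n`. -/
def nodeTuple {σ : Voc} (S : Str3 σ) (node : S.U → Fml σ Unit) {n : ℕ}
    (t : Fin n → S.U) : Fml σ (Fin n) :=
  Fml.conj (List.ofFn fun j : Fin n => (node (t j)).map (fun _ => j))

/-- Universal closure of a formula with `n` free variables. -/
def closeAll {σ : Voc} : {n : ℕ} → Fml σ (Fin n) → Fml σ Empty
  | 0, φ => φ.map Fin.elim0
  | _ + 1, φ =>
      closeAll (Fml.all (φ.map (fun i => Fin.lastCases none (fun j => some j) i)))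

/-- Existential closure of a formula with `n` free variables. -/
def closeEx {σ : Voc} : {n : ℕ} → Fml σ (Fin n) → Fml σ Empty
  | 0, φ => φ.map Fin.elim0
  | _ + 1, φ =>
      closeEx (Fml.ex (φ.map (fun i => Fin.lastCases none (fun j => some j) i)))

/-- `∃ v : node_u(v)`. -/
noncomputable def existsNode {σ : Voc} (S : Str3 σ) (node : S.U → Fml σ Unit) (u : S.U) :
    Fml σ Empty :=
  .ex ((node u).map (fun _ => (none : Option Empty)))

/-- The totality formula `∀ w : ⋁_i node_{u_i}(w)`. -/
noncomputable def xiTotal {σ : Voc} (S : Str3 σ) [Fintype S.U] (node : S.U → Fml σ Unit) :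
    Fml σ Empty :=
  Fml.all (Fml.disj
    (((Finset.univ : Finset S.U).toList).map
      (fun u => (node u).map (fun _ => (none : Option Empty)))))

/-- The nullary characteristic formula `⋀_{p nullary} p^{ι^S(p)()}`. -/
noncomputable def xiNullary {σ : Voc} [Fintype σ.rel] (S : Str3 σ) : Fml σ Empty :=
  Fml.conj
    (((Finset.univ : Finset σ.rel).toList).map (fun p =>
      if h : σ.ar p = 0 then
        charFml p (fun i => Fin.elim0 (Fin.cast h i))
          (S.ι p (fun i => Fin.elim0 (Fin.cast h i)))
      else .tru))

/-- The predicate characteristic formula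
`∀ w1 … wr : ⋀_{tuples ū} ((⋀_j node_{ū j}(w_j)) → p^{ι^S(p)(ū)}(w̄))`. -/
noncomputable def xiPred {σ : Voc} (S : Str3 σ) [Fintype S.U] (node : S.U → Fml σ Unit)
    (p : σ.rel) : Fml σ Empty :=
  closeAll (Fml.conj
    (((Finset.univ : Finset (Fin (σ.ar p) → S.U)).toList).map
      (fun t => Fml.imp (nodeTuple S node t)
        (charFml p (fun j => j) (S.ι p t)))))

/-- Conjunction of the predicate characteristic formulas over all predicates of
arity ≥ 1. -/
noncomputable def xiPredAll {σ : Voc} [Fintype σ.rel] (S : Str3 σ) [Fintype S.U]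
    (node : S.U → Fml σ Unit) : Fml σ Empty :=
  Fml.conj
    (((Finset.univ : Finset σ.rel).toList).map (fun p =>
      if σ.ar p = 0 then .tru else xiPred S node p))

/-- The first-order characteristic formula `ξ^S` of `S` (w.r.t. the node
formulas `node`). -/
noncomputable def xi {σ : Voc} [Fintype σ.rel] (S : Str3 σ) [Fintype S.U]
    (node : S.U → Fml σ Unit) : Fml σ Empty :=
  (Fml.conj (((Finset.univ : Finset S.U).toList).map (existsNode S node))).and
    ((xiTotal S node).and ((xiNullary S).and (xiPredAll S node)))

/-- The concretization `γ(S)`: the 2-valued structures that embed into `S` and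
satisfy the integrity formula `F`. -/
def gammaSet {σ : Voc} (F : Fml σ Empty) (S : Str3 σ) : Set (Str2 σ) :=
  {C | (∃ f : C.U → S.U, Embeds C S f) ∧ SatC C F}

/-- `S` is the canonical abstraction of the 2-valued structure `C` via `blur`:
`blur` is a surjective embedding that identifies exactly the concrete nodes with
equal canonical names (the values of the unary predicates), and every abstract
predicate value is the join of the concrete values it represents. -/
def IsCanonAbs {σ : Voc} (C : Str2 σ) (S : Str3 σ) (blur : C.U → S.U) : Prop :=
  Embeds C S blur ∧
    (∀ u v : C.U, blur u = blur v ↔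
      ∀ p : σ.rel, σ.ar p = 1 → C.ι p (fun _ => u) = C.ι p (fun _ => v)) ∧
    ∀ (p : σ.rel) (t' : Fin (σ.ar p) → S.U),
      TV.IsJoin {b | ∃ t : Fin (σ.ar p) → C.U, blur ∘ t = t' ∧ C.tv p t = b}
        (S.ι p t')

/-- `S` is an image of canonical abstraction. -/
def ICA {σ : Voc} (S : Str3 σ) : Prop :=
  ∃ (C : Str2 σ) (blur : C.U → S.U), IsCanonAbs C S blur

/-- The concretization of `S` under canonical abstraction. -/
def gammaC {σ : Voc} (F : Fml σ Empty) (S : Str3 σ) : Set (Str2 σ) :=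
  {C | (∃ blur : C.U → S.U, IsCanonAbs C S blur) ∧ SatC C F}

/-- `node` is a family of node formulas witnessing canonical-FO-identifiability
of `S`. -/
def IsCanonNodeFamily {σ : Voc} (S : Str3 σ) (node : S.U → Fml σ Unit) : Prop :=
  ∀ (C : Str2 σ) (blur : C.U → S.U), IsCanonAbs C S blur →
    ∀ (uh : C.U) (u : S.U), blur uh = u ↔ C.Sat (fun _ => uh) (node u)

/-- `τ^S[p]`: for every tuple where `p` has value 1/2, there are concrete
tuples (satisfying the node formulas) on which `p` holds, resp., fails. -/
noncomputable def tauPred {σ : Voc} (S : Str3 σ) [Fintype S.U] (node : S.U → Fml σ Unit)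
    (p : σ.rel) : Fml σ Empty :=
  Fml.conj
    (((((Finset.univ : Finset (Fin (σ.ar p) → S.U)).toList).filter
        (fun t => decide (S.ι p t = TV.half))).map
      (fun t =>
        (closeEx ((nodeTuple S node t).and (.atom p (fun j => j)))).and
          (closeEx ((nodeTuple S node t).and (.not (.atom p (fun j => j))))))))

/-- `τ^S := ξ^S ∧ ⋀_{p of arity ≥ 2} τ^S[p]`. -/
noncomputable def tau {σ : Voc} [Fintype σ.rel] (S : Str3 σ) [Fintype S.U]
    (node : S.U → Fml σ Unit) : Fml σ Empty :=
  (xi S node).and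
    (Fml.conj (((Finset.univ : Finset σ.rel).toList).map (fun p =>
      if 2 ≤ σ.ar p then tauPred S node p else .tru)))

/-- Isomorphism of 3-valued structures. -/
def Iso3 {σ : Voc} (S1 S2 : Str3 σ) : Prop :=
  ∃ e : S1.U ≃ S2.U,
    ∀ (p : σ.rel) (t : Fin (σ.ar p) → S1.U), S1.ι p t = S2.ι p (e ∘ t)

/-- Satisfaction of the NP (existential monadic second-order) characteristic
formula `ψ^S` of `S` in the 2-valued structure `C`: there exist sets `V_u`
(one per node `u` of `S`) that are nonempty, pairwise disjoint, and cover `C`,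
such that the nullary and the predicate characteristic conjuncts hold with
`node_{u}(w) := w ∈ V_u`. -/
def SatNP {σ : Voc} (S : Str3 σ) (C : Str2 σ) : Prop :=
  ∃ V : S.U → Set C.U,
    (∀ u : S.U, ∃ w, w ∈ V u) ∧
    (∀ u1 u2 : S.U, u1 ≠ u2 →
      ∀ w1 ∈ V u1, ∀ w2 ∈ V u2, ¬ C.ι σ.eqr (pair w1 w2) = true) ∧
    (∀ w : C.U, ∃ u : S.U, w ∈ V u) ∧
    (∀ (p : σ.rel) (h : σ.ar p = 0),
      TV.le (C.tv p (fun i => Fin.elim0 (Fin.cast h i)))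
        (S.ι p (fun i => Fin.elim0 (Fin.cast h i)))) ∧
    (∀ (p : σ.rel), 1 ≤ σ.ar p →
      ∀ (t : Fin (σ.ar p) → C.U) (us : Fin (σ.ar p) → S.U),
        (∀ j, t j ∈ V (us j)) → TV.le (C.tv p t) (S.ι p us))


section AuxLemmas

variable {σ : Voc} (C : Str2 σ)

lemma sat_map {V : Type} (φ : Fml σ V) :
    ∀ {W : Type} (g : V → W) (ρ : W → C.U),
      C.Sat ρ (φ.map g) ↔ C.Sat (ρ ∘ g) φ := by
  induction φ with
  | tru => intro W g ρ; simp [Fml.map, Str2.Sat]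
  | atom r ts => intro W g ρ; rfl
  | not φ ih => intro W g ρ; simp only [Fml.map, Str2.Sat, ih]
  | or φ ψ ih1 ih2 => intro W g ρ; simp only [Fml.map, Str2.Sat, ih1, ih2]
  | ex φ ih =>
      intro W g ρ
      simp only [Fml.map, Str2.Sat]
      refine exists_congr fun m => ?_
      rw [ih]
      have e : ((fun v => Option.elim v m ρ) ∘ Option.map g)
          = (fun v => Option.elim v m (ρ ∘ g)) := by
        funext v; cases v <;> rfl
      rw [e]
  | tc φ a b ih =>
      intro W g ρ
      simp only [Fml.map, Str2.Sat]
      have e : (fun x y => C.Sat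
            (fun v => Option.elim v y (fun v' => Option.elim v' x ρ))
            (φ.map (Option.map (Option.map g))))
          = (fun x y => C.Sat
            (fun v => Option.elim v y (fun v' => Option.elim v' x (ρ ∘ g))) φ) := by
        funext x y
        rw [ih]
        have e2 : ((fun v => Option.elim v y (fun v' => Option.elim v' x ρ))
              ∘ Option.map (Option.map g))
            = (fun v => Option.elim v y (fun v' => Option.elim v' x (ρ ∘ g))) := by
          funext v
          cases v with
          | none => rfl
          | some v' => cases v' <;> rfl
        rw [e2]
      rw [e]
      rfl

lemma sat_and {V : Type} (ρ : V → C.U) (φ ψ : Fml σ V) :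
    C.Sat ρ (φ.and ψ) ↔ C.Sat ρ φ ∧ C.Sat ρ ψ := by
  simp only [Fml.and, Str2.Sat, not_or, not_not]

lemma sat_imp {V : Type} (ρ : V → C.U) (φ ψ : Fml σ V) :
    C.Sat ρ (φ.imp ψ) ↔ (C.Sat ρ φ → C.Sat ρ ψ) := by
  simp only [Fml.imp, Str2.Sat]
  tauto

lemma sat_conj {V : Type} (ρ : V → C.U) (l : List (Fml σ V)) :
    C.Sat ρ (Fml.conj l) ↔ ∀ φ ∈ l, C.Sat ρ φ := by
  induction l with
  | nil => simp [Fml.conj, Str2.Sat]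
  | cons x l ih =>
      rw [show Fml.conj (x :: l) = x.and (Fml.conj l) from rfl, sat_and]
      simp [ih]

lemma sat_disj {V : Type} (ρ : V → C.U) (l : List (Fml σ V)) :
    C.Sat ρ (Fml.disj l) ↔ ∃ φ ∈ l, C.Sat ρ φ := by
  induction l with
  | nil => simp [Fml.disj, Fml.fls, Str2.Sat]
  | cons x l ih =>
      rw [show Fml.disj (x :: l) = Fml.or x (Fml.disj l) from rfl]
      rw [show C.Sat ρ (Fml.or x (Fml.disj l)) ↔
        (C.Sat ρ x ∨ C.Sat ρ (Fml.disj l)) from Iff.rfl]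
      simp [ih]

lemma sat_all {V : Type} (ρ : V → C.U) (φ : Fml σ (Option V)) :
    C.Sat ρ (Fml.all φ) ↔ ∀ m, C.Sat (fun v => Option.elim v m ρ) φ := by
  simp only [Fml.all, Str2.Sat, not_exists, not_not]

lemma sat_closeAll : ∀ {n : ℕ} (φ : Fml σ (Fin n)),
    C.Sat (fun x : Empty => x.elim) (closeAll φ) ↔ ∀ ρ : Fin n → C.U, C.Sat ρ φ := by
  intro n
  induction n with
  | zero =>
      intro φ
      rw [show closeAll φ = φ.map Fin.elim0 from rfl, sat_map]
      constructor
      · intro h ρ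
        have e : ρ = ((fun x : Empty => x.elim) ∘ Fin.elim0) := by
          funext i; exact i.elim0
        rw [e]; exact h
      · intro h; exact h _
  | succ n ih =>
      intro φ
      rw [show closeAll φ = closeAll
        (Fml.all (φ.map (fun i => Fin.lastCases none (fun j => some j) i))) from rfl, ih]
      constructor
      · intro h ρ'
        have h2 := (sat_all C _ _).mp (h (ρ' ∘ Fin.castSucc)) (ρ' (Fin.last n))
        rw [sat_map] at h2
        have e : ((fun v => Option.elim v (ρ' (Fin.last n)) (ρ' ∘ Fin.castSucc))
              ∘ (fun i => Fin.lastCases none (fun j => some j) i)) = ρ' := by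
          funext i
          refine Fin.lastCases ?_ ?_ i
          · simp
          · intro j; simp
        rw [e] at h2
        exact h2
      · intro h ρ
        rw [sat_all]
        intro m
        rw [sat_map]
        exact h _

lemma sat_charFml {V : Type} (ρ : V → C.U) (p : σ.rel) (ts : Fin (σ.ar p) → V)
    (B : TV) (h : C.Sat ρ (charFml p ts B)) : TV.le (C.tv p (ρ ∘ ts)) B := by
  cases B with
  | zero =>
      simp only [charFml, Str2.Sat] at h
      have hb : C.ι p (ρ ∘ ts) = false := by simpa using h
      simp [Str2.tv, hb, TV.le]
  | one =>
      simp only [charFml, Str2.Sat] at h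
      simp [Str2.tv, h, TV.le]
  | half => exact Or.inr rfl

end AuxLemmas

/-- if the node formulas used in `γ̂(S)` are arbitrary formulas
with free variable `w` satisfying the mutual-exclusivity property, then every
2-valued structure satisfying `γ̂(S) = F ∧ ξ^S` is in `γ(S)`, i.e., it
satisfies `F` and embeds (surjectively) into `S`. -/
theorem sat_gammaHat_mem_gamma {σ : Voc} [Fintype σ.rel] (F : Fml σ Empty)
    (S : Str3 σ) [Fintype S.U] (node : S.U → Fml σ Unit)
    (hmut : MutExcl S node) (C : Str2 σ)
    (h : SatC C (F.and (xi S node))) :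
    C ∈ gammaSet F S := by
  classical
  have h0 : C.Sat (fun x : Empty => x.elim) (F.and (xi S node)) := h
  obtain ⟨hF, hxi⟩ := (sat_and C _ _ _).mp h0
  obtain ⟨h1, hxi⟩ := (sat_and C _ _ _).mp hxi
  obtain ⟨h2, hxi⟩ := (sat_and C _ _ _).mp hxi
  obtain ⟨h3, h4⟩ := (sat_and C _ _ _).mp hxi
  -- existence of witnesses for each node formula
  have hex : ∀ u : S.U, ∃ a : C.U, C.Sat (fun _ => a) (node u) := by
    intro u
    have hm := (sat_conj C _ _).mp h1 _
      (List.mem_map.mpr ⟨u, by simp, rfl⟩)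
    simp only [existsNode, Str2.Sat] at hm
    obtain ⟨m, hm⟩ := hm
    rw [sat_map] at hm
    exact ⟨m, hm⟩
  -- totality
  have htot : ∀ a : C.U, ∃ u : S.U, C.Sat (fun _ => a) (node u) := by
    intro a
    have hm := (sat_all C _ _).mp h2 a
    obtain ⟨φ, hφ, hsat⟩ := (sat_disj C _ _).mp hm
    obtain ⟨u, _, rfl⟩ := List.mem_map.mp hφ
    rw [sat_map] at hsat
    exact ⟨u, hsat⟩
  -- nullary predicates
  have hnull : ∀ (p : σ.rel), σ.ar p = 0 → ∀ (tC : Fin (σ.ar p) → C.U)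
      (tS : Fin (σ.ar p) → S.U), TV.le (C.tv p tC) (S.ι p tS) := by
    intro p hp tC tS
    have hm := (sat_conj C _ _).mp h3 _
      (List.mem_map.mpr ⟨p, by simp, rfl⟩)
    rw [dif_pos hp] at hm
    have hc := sat_charFml C _ p _ _ hm
    have e1 : tC = ((fun x : Empty => x.elim) ∘ (fun i => Fin.elim0 (Fin.cast hp i))) := by
      funext i; exact (Fin.cast hp i).elim0
    have e2 : (fun i => Fin.elim0 (Fin.cast hp i)) = tS := by
      funext i; exact (Fin.cast hp i).elim0
    rw [e2] at hc
    rw [e1]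
    exact hc
  -- predicates of positive arity
  have hpred : ∀ (p : σ.rel), σ.ar p ≠ 0 → ∀ (tC : Fin (σ.ar p) → C.U)
      (tS : Fin (σ.ar p) → S.U),
      (∀ j, C.Sat (fun _ => tC j) (node (tS j))) → TV.le (C.tv p tC) (S.ι p tS) := by
    intro p hp tC tS hnodes
    have hm := (sat_conj C _ _).mp h4 _
      (List.mem_map.mpr ⟨p, by simp, rfl⟩)
    rw [if_neg hp] at hm
    have hall := (sat_closeAll C _).mp hm tC
    have hmem : Fml.imp (nodeTuple S node tS)
        (charFml p (fun j => j) (S.ι p tS)) ∈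
        ((Finset.univ : Finset (Fin (σ.ar p) → S.U)).toList).map
          (fun t => Fml.imp (nodeTuple S node t) (charFml p (fun j => j) (S.ι p t))) :=
      List.mem_map.mpr ⟨tS, by simp, rfl⟩
    have h5 := (sat_conj C _ _).mp hall _ hmem
    have hnt : C.Sat tC (nodeTuple S node tS) := by
      rw [nodeTuple, sat_conj]
      intro φ hφ
      rw [List.mem_ofFn] at hφ
      obtain ⟨j, rfl⟩ := hφ
      exact (sat_map C _ _ _).mpr (hnodes j)
    have h6 := (sat_imp C _ _ _).mp h5 hnt
    have h7 := sat_charFml C tC p (fun j => j) _ h6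
    exact h7
  -- uniqueness of the node formula satisfied by a concrete node,
  -- derived from the equality-predicate conjunct of ξ
  have huniq : ∀ (a : C.U) (u1 u2 : S.U), C.Sat (fun _ => a) (node u1) →
      C.Sat (fun _ => a) (node u2) → u1 = u2 := by
    intro a u1 u2 hs1 hs2
    by_contra hne
    have hz : S.ι σ.eqr (pair u1 u2) = TV.zero := S.eq_ne _ _ hne
    have harne : σ.ar σ.eqr ≠ 0 := by rw [σ.eq_ar]; omega
    have hle := hpred σ.eqr harne (fun _ => a) (pair u1 u2) ?_
    · rw [hz] at hle
      have htv : C.tv σ.eqr (fun _ => a) = TV.zero := by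
        rcases hle with he | he
        · exact he
        · exact absurd he (by simp)
      have hpa : pair a a = (fun _ : Fin (σ.ar σ.eqr) => a) := by
        funext j; simp [pair]
      have hii : C.ι σ.eqr (fun _ => a) = true := by
        rw [← hpa]; exact (C.eq_iff a a).mpr rfl
      rw [Str2.tv, hii] at htv
      simp at htv
    · intro j
      by_cases hj : (j : ℕ) = 0
      · simpa [pair, hj] using hs1
      · simpa [pair, hj] using hs2
  -- define the embedding
  choose f hf using htot
  refine ⟨⟨f, ?_, ?_⟩, hF⟩
  · -- surjective
    intro u
    obtain ⟨a, ha⟩ := hex u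
    exact ⟨a, huniq a _ _ (hf a) ha⟩
  · -- predicate condition
    intro r t
    by_cases h0 : σ.ar r = 0
    · exact hnull r h0 t (f ∘ t)
    · exact hpred r h0 t (f ∘ t) (fun j => hf (t j))
end HeapAbs
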